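/- Let X be a finite pure simplicial complex of dimension at least 2, let G be a group acting on a finite nonempty set S, and let φ ∈ C¹(X;G). Then ((|S| − Fix_G(S))/|S|)·‖d₁φ‖ ≤ m_f(Y_φ), where f:Y_φ→X is the projection map. -/

import Mathlib

open Finset

variable {V : Type*} [DecidableEq V]

/-- A finite abstract simplicial complex on vertex type `V`. -/
structure SComplex (V : Type*) [DecidableEq V] where
  faces : Finset (Finset V)
  nonempty_of_mem : ∀ σ ∈ faces, σ.Nonempty
  down_closed : ∀ σ ∈ faces, ∀ τ ⊆ σ, τ.Nonempty → τ ∈ faces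

namespace SComplex

/-- The set `X(k)` of `k`-dimensional simplices (cardinality `k+1`). -/
def simps (X : SComplex V) (k : ℕ) : Finset (Finset V) :=
  X.faces.filter fun σ => σ.card = k + 1

/-- The number of vertices of a top-dimensional face. -/
def rank (X : SComplex V) : ℕ := X.faces.sup Finset.card

/-- The weight `c_X(σ)`. -/
noncomputable def weight (X : SComplex V) (σ : Finset V) : ℝ :=
  (((X.simps (X.rank - 1)).filter fun τ => σ ⊆ τ).card : ℝ) /
    ((X.rank.choose σ.card) * ((X.simps (X.rank - 1)).card))

/-- `X` is pure of dimension `n-1` : every face is contained in a face with `n` vertices. -/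
def IsPureOfRank (X : SComplex V) (n : ℕ) : Prop :=
  X.faces.Nonempty ∧ ∀ σ ∈ X.faces, ∃ τ ∈ X.faces, σ ⊆ τ ∧ τ.card = n

/-- The link `lk(X,σ)`. -/
def lk (X : SComplex V) (σ : Finset V) : SComplex V where
  faces := X.faces.filter fun η => η ∪ σ ∈ X.faces ∧ Disjoint η σ
  nonempty_of_mem := fun η hη => X.nonempty_of_mem η (mem_filter.mp hη).1
  down_closed := by
    intro η hη τ hτη hτ
    rw [mem_filter] at hη ⊢
    refine ⟨X.down_closed η hη.1 τ hτη hτ,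
      X.down_closed (η ∪ σ) hη.2.1 (τ ∪ σ) (union_subset_union_left hτη) ?_,
      hη.2.2.mono_left hτη⟩
    exact hτ.mono subset_union_left

/-- The star `st(X,σ)`. -/
def star (X : SComplex V) (σ : Finset V) : Finset (Finset V) :=
  X.faces.filter fun τ => τ ∪ σ ∈ X.faces

/-- The vertices of `X`. -/
def verts (X : SComplex V) [Fintype V] : Finset V :=
  Finset.univ.filter fun v => ({v} : Finset V) ∈ X.faces

end SComplex
section Cochains

variable {G : Type*} [Group G]

/-- `φ ∈ C¹(X;G)`: an antisymmetric `G`-valued function on ordered pairs. -/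
def IsCochain (G : Type*) [Group G] (φ : V → V → G) : Prop :=
  ∀ u v : V, φ u v = (φ v u)⁻¹

/-- The coboundary `d₁φ(u,v,w) = φ(u,v)φ(v,w)φ(w,u)`. -/
def d1 (φ : V → V → G) (u v w : V) : G := φ u v * φ v w * φ w u

/-- `φ ∈ Z¹(X;G)`: a cochain all of whose triangle equations hold. -/
def IsCocycle (X : SComplex V) (φ : V → V → G) : Prop :=
  IsCochain G φ ∧ ∀ u v w : V, ({u, v, w} : Finset V) ∈ X.simps 2 → d1 φ u v w = 1

open Classical in
/-- The norm `‖φ‖`: total weight of the support of `φ`. -/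
noncomputable def norm1 (X : SComplex V) (φ : V → V → G) : ℝ :=
  ∑ e ∈ (X.simps 1).filter (fun e => ∃ u v : V, e = {u, v} ∧ φ u v ≠ 1), X.weight e

open Classical in
/-- The norm `‖d₁φ‖`: total weight of the 2-simplices whose equation is violated. -/
noncomputable def normD1 (X : SComplex V) (φ : V → V → G) : ℝ :=
  ∑ τ ∈ (X.simps 2).filter (fun τ => ∃ u v w : V, τ = {u, v, w} ∧ d1 φ u v w ≠ 1), X.weight τ

/-- `dist(φ,ψ) = ‖φψ⁻¹‖`. -/
noncomputable def dist1 (X : SComplex V) (φ ψ : V → V → G) : ℝ :=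
  norm1 X (fun u v => φ u v * (ψ u v)⁻¹)

/-- The cosystolic norm `‖φ‖_csy`: the distance from `φ` to `Z¹(X;G)`. -/
noncomputable def csyNorm (X : SComplex V) (φ : V → V → G) : ℝ :=
  sInf {d : ℝ | ∃ ψ : V → V → G, IsCocycle X ψ ∧ d = dist1 X φ ψ}

/-- The cosystolic expansion `h₁(X;G)`. -/
noncomputable def h1 (X : SComplex V) (G : Type*) [Group G] : ℝ :=
  sInf {r : ℝ | ∃ φ : V → V → G, IsCochain G φ ∧ ¬ IsCocycle X φ ∧
    r = normD1 X φ / csyNorm X φ}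

end Cochains

section Fix

variable (G : Type*) [Group G] (S : Type*) [Fintype S] [MulAction G S]

open Classical in
/-- `fix(g) = |{s ∈ S : g•s = s}|`. -/
noncomputable def fixCard (g : G) : ℕ :=
  (Finset.univ.filter fun s : S => g • s = s).card

/-- `Fix_G(S) = max_{g ≠ 1} fix(g)`. -/
noncomputable def FixG : ℕ :=
  sSup {k : ℕ | ∃ g : G, g ≠ 1 ∧ fixCard G S g = k}

end Fix
section Ycomplex

variable {G : Type*} [Group G] {S : Type*} [Fintype S] [DecidableEq S] [MulAction G S]
variable [Fintype V]

open Classical in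
/-- The complex `Y_φ` associated to a cochain `φ`, together with the projection
`Prod.fst : Y_φ → X`. -/
noncomputable def Ycomplex (X : SComplex V) (φ : V → V → G) (S : Type*)
    [Fintype S] [DecidableEq S] [MulAction G S] : SComplex (V × S) where
  faces := Finset.univ.filter fun σ : Finset (V × S) =>
    σ.image Prod.fst ∈ X.faces ∧ (σ.image Prod.fst).card = σ.card ∧
    ∀ p ∈ σ, ∀ q ∈ σ, p.1 ≠ q.1 → p.2 = φ p.1 q.1 • q.2
  nonempty_of_mem := by
    intro σ hσ
    rw [Finset.mem_filter] at hσ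
    exact Finset.image_nonempty.mp (X.nonempty_of_mem _ hσ.2.1)
  down_closed := by
    intro σ hσ τ hτσ hτ
    rw [Finset.mem_filter] at hσ ⊢
    obtain ⟨-, h1, h2, h3⟩ := hσ
    refine ⟨Finset.mem_univ _,
      X.down_closed _ h1 _ (Finset.image_subset_image hτσ) (Finset.image_nonempty.mpr hτ),
      ?_, fun p hp q hq => h3 p (hτσ hp) q (hτσ hq)⟩
    exact Finset.card_image_iff.mpr ((Finset.card_image_iff.mp h2).mono hτσ)

end Ycomplex

section Deficiency

variable {W : Type*} [DecidableEq W] [Fintype W] [Fintype V]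

open Classical in
/-- `D_f(ut)`: the edges in the link of `f(ut)` that are not covered by the image of the
link of `ut`. -/
noncomputable def Dset (Y : SComplex W) (X : SComplex V) (f : W → V) (ut : W) :
    Finset (Finset V) :=
  ((X.lk {f ut}).simps 1).filter fun e => ¬ ∃ η ∈ (Y.lk {ut}).faces, η.image f = e

/-- The local deficiency `μ_f(ut)`. -/
noncomputable def locDef (Y : SComplex W) (X : SComplex V) (f : W → V) (ut : W) : ℝ :=
  ∑ e ∈ Dset Y X f ut, (X.lk {f ut}).weight e

open Classical in
/-- The deficiency `m_f(Y)` of a map `f : Y → X`. -/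
noncomputable def deficiency (Y : SComplex W) (X : SComplex V) (f : W → V) : ℝ :=
  ∑ u ∈ X.verts, (X.weight {u} / ((Y.verts.filter fun w => f w = u).card : ℝ)) *
    ∑ ut ∈ Y.verts.filter (fun w => f w = u), locDef Y X f ut

end Deficiency
section MapOver

variable [Fintype V]

/-- An element of `M(X;G,S)`: a surjective simplicial `|S|`-to-`1` map onto `X` whose
vertex fibers are identified with `S` and whose edge fibers are matchings given by the
action of elements of `G`. -/
structure MapOver (X : SComplex V) (G : Type*) (S : Type*) [Group G] [Fintype S]
    [DecidableEq S] [MulAction G S] [Fintype V] where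
  Y : SComplex (V × S)
  simplicial : ∀ τ ∈ Y.faces, τ.image Prod.fst ∈ X.faces
  injOnFaces : ∀ τ ∈ Y.faces, (τ.image Prod.fst).card = τ.card
  surj : ∀ σ ∈ X.faces, ∃ τ ∈ Y.faces, τ.image Prod.fst = σ
  fiber : ∀ p : V × S, ({p} : Finset (V × S)) ∈ Y.faces ↔ ({p.1} : Finset V) ∈ X.faces
  edges : ∀ u v : V, ({u, v} : Finset V) ∈ X.simps 1 → ∃ g : G,
    ∀ s t : S, (({(u, s), (v, t)} : Finset (V × S)) ∈ Y.faces ↔ s = g • t)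

variable {G : Type*} [Group G] {S : Type*} [Fintype S] [DecidableEq S] [MulAction G S]

open Classical in
/-- The set of edges of `Y` lying over a given edge of the base. -/
noncomputable def edgeFiber (Y : SComplex (V × S)) (e : Finset V) :
    Finset (Finset (V × S)) :=
  (Y.simps 1).filter fun e' => e'.image Prod.fst = e

open Classical in
/-- The distance between two elements of `M(X;G,S)`: the weight of the set of edges of
`X` over which the two edge fibers differ. -/
noncomputable def mdist (X : SComplex V) (M₁ M₂ : MapOver X G S) : ℝ :=
  ∑ e ∈ (X.simps 1).filter (fun e => edgeFiber M₁.Y e ≠ edgeFiber M₂.Y e), X.weight e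

/-- The distance from an element of `M(X;G,S)` to the set `M₀(X;G,S)` of genuine covers. -/
noncomputable def distToCovers (X : SComplex V) (M : MapOver X G S) : ℝ :=
  sInf {d : ℝ | ∃ M' : MapOver X G S, deficiency M'.Y X Prod.fst = 0 ∧ d = mdist X M M'}

/-- The `(G,S)`-cover-stability `c(X;G,S)`. -/
noncomputable def coverStability (X : SComplex V) (G : Type*) (S : Type*) [Group G]
    [Fintype S] [DecidableEq S] [MulAction G S] : ℝ :=
  sInf {r : ℝ | ∃ M : MapOver X G S, deficiency M.Y X Prod.fst ≠ 0 ∧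
    r = deficiency M.Y X Prod.fst / distToCovers X M}

end MapOver
section Paths

/-- A (possibly closed) edge path in a complex: consecutive vertices span edges. -/
def IsEdgePath (K : SComplex V) (p : List V) : Prop :=
  (∀ v ∈ p, ({v} : Finset V) ∈ K.faces) ∧
    p.Chain' fun u v => ({u, v} : Finset V) ∈ K.faces

/-- Combinatorial homotopy of edge paths, generated by erasing repetitions and by
collapsing across simplices. -/
inductive Homotopic (K : SComplex V) : List V → List V → Prop
  | refl (p : List V) : Homotopic K p p
  | symm {p q : List V} : Homotopic K p q → Homotopic K q p
  | trans {p q r : List V} : Homotopic K p q → Homotopic K q r → Homotopic K p r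
  | collapse (p q : List V) (a b c : V) (h : ({a, b, c} : Finset V) ∈ K.faces) :
      Homotopic K (p ++ a :: b :: c :: q) (p ++ a :: c :: q)
  | dedup (p q : List V) (a : V) : Homotopic K (p ++ a :: a :: q) (p ++ a :: q)

/-- `K` is connected: any two vertices are joined by an edge path. -/
def SComplexConnected (K : SComplex V) : Prop :=
  ∀ u v : V, ({u} : Finset V) ∈ K.faces → ({v} : Finset V) ∈ K.faces →
    ∃ p : List V, IsEdgePath K p ∧ p.head? = some u ∧ p.getLast? = some v

/-- `K` is simply connected: connected, and every closed edge path is null-homotopic. -/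
def SimplyConnected (K : SComplex V) : Prop :=
  SComplexConnected K ∧
    ∀ (p : List V) (a : V), IsEdgePath K p → p.head? = some a → p.getLast? = some a →
      Homotopic K p [a]

end Paths

section OrderComplex

open Classical in
/-- The order complex of `L ∖ {⊥, ⊤}`: simplices are the nonempty chains avoiding
`⊥` and `⊤`. -/
noncomputable def orderComplex (L : Type*) [Lattice L] [BoundedOrder L] [Fintype L]
    [DecidableEq L] : SComplex L where
  faces := Finset.univ.filter fun σ : Finset L =>
    σ.Nonempty ∧ (∀ x ∈ σ, x ≠ ⊥ ∧ x ≠ ⊤) ∧ ∀ x ∈ σ, ∀ y ∈ σ, x ≤ y ∨ y ≤ x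
  nonempty_of_mem := fun σ hσ => (Finset.mem_filter.mp hσ).2.1
  down_closed := by
    intro σ hσ τ hτσ hτ
    rw [Finset.mem_filter] at hσ ⊢
    exact ⟨Finset.mem_univ _, hτ, fun x hx => hσ.2.2.1 x (hτσ hx),
      fun x hx y hy => hσ.2.2.2 x (hτσ hx) y (hτσ hy)⟩

end OrderComplex
section Building

variable (F : Type*) [Field F] [Fintype F]

noncomputable instance : Fintype (Submodule F (Fin 4 → F)) := by
  have : Finite (Submodule F (Fin 4 → F)) :=
    Finite.of_injective (fun N => (N : Set (Fin 4 → F))) SetLike.coe_injective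
  exact Fintype.ofFinite _

noncomputable instance : DecidableEq (Submodule F (Fin 4 → F)) := Classical.decEq _

/-- The spherical building `A₃(F_q)`: the order complex of the poset of nontrivial proper
linear subspaces of `F_q⁴`. -/
noncomputable def A3 : SComplex (Submodule F (Fin 4 → F)) :=
  orderComplex (Submodule F (Fin 4 → F))

end Building
section FixEdge

variable {G : Type*} [Group G]

open Classical in
/-- The value `fix(d₁φ(u,v₁,v₂))` for an unordered edge `e = {v₁,v₂}` of the link of `u`
(well defined for cochains, since `fix` is invariant under inversion and conjugation). -/
noncomputable def fixEdge (S : Type*) [Fintype S] [MulAction G S] (φ : V → V → G)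
    (u : V) (e : Finset V) : ℕ :=
  sSup {k : ℕ | ∃ v₁ ∈ e, ∃ v₂ ∈ e, v₁ ≠ v₂ ∧ k = fixCard G S (d1 φ u v₁ v₂)}

end FixEdge
/-!
The fibre of `Y_φ` over a vertex `u` is `{u} × S`. If `d₁φ(u,v,w) = g ≠ 1` on a triangle
`{u,v,w}`, then for every `s` moved by `g` the edge `{v,w}` of `lk(X,u)` does not lift to the
link of `[u,s]`: a lift would force `s = φ(u,v)φ(v,w)φ(w,u)·s`. So at least `|S| - Fix_G(S)` of
the `|S|` sheets over `u` miss `{v,w}`. Purity gives `c_X(u)·c_{lk(X,u)}(τ ∖ u) = c_X(τ)/|τ|`,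
so summing these local defects over the three vertices of each violated triangle `τ`
recovers `‖d₁φ‖`.
-/

namespace SComplex

variable {X : SComplex V} {n k : ℕ} {σ τ η a : Finset V} {u : V}

@[simp] lemma mem_simps : σ ∈ X.simps k ↔ σ ∈ X.faces ∧ σ.card = k + 1 := mem_filter

@[simp] lemma mem_lk : η ∈ (X.lk σ).faces ↔ η ∈ X.faces ∧ η ∪ σ ∈ X.faces ∧ Disjoint η σ :=
  mem_filter

@[simp] lemma mem_verts [Fintype V] : u ∈ X.verts ↔ {u} ∈ X.faces := by simp [verts]

lemma weight_nonneg (X : SComplex V) (σ : Finset V) : 0 ≤ X.weight σ := by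
  unfold weight; positivity

lemma singleton_mem_faces (hτ : τ ∈ X.faces) (hu : u ∈ τ) : {u} ∈ X.faces :=
  X.down_closed τ hτ _ (singleton_subset_iff.2 hu) (singleton_nonempty u)

lemma erase_mem_lk (hτ : τ ∈ X.faces) (hu : u ∈ τ) (hc : 2 ≤ τ.card) :
    τ.erase u ∈ (X.lk {u}).faces := by
  refine mem_lk.2 ⟨X.down_closed τ hτ _ (erase_subset u τ) ?_, ?_,
    disjoint_singleton_right.2 (notMem_erase u τ)⟩
  · rw [← card_pos, card_erase_of_mem hu]; omega
  · rwa [union_singleton, insert_erase hu]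

lemma IsPureOfRank.rank_eq (h : X.IsPureOfRank n) : X.rank = n := by
  obtain ⟨⟨σ₀, hσ₀⟩, hpure⟩ := h
  refine le_antisymm (Finset.sup_le fun σ hσ => ?_) ?_
  · obtain ⟨τ, -, hστ, rfl⟩ := hpure σ hσ
    exact card_le_card hστ
  · obtain ⟨τ, hτ, -, rfl⟩ := hpure σ₀ hσ₀
    exact le_sup hτ

lemma IsPureOfRank.card_le (h : X.IsPureOfRank n) (hσ : σ ∈ X.faces) : σ.card ≤ n := by
  obtain ⟨τ, -, hστ, rfl⟩ := h.2 σ hσ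
  exact card_le_card hστ

lemma IsPureOfRank.lk (h : X.IsPureOfRank n) (hn : 2 ≤ n) (hu : {u} ∈ X.faces) :
    (X.lk {u}).IsPureOfRank (n - 1) := by
  refine ⟨?_, fun η hη => ?_⟩
  · obtain ⟨τ, hτ, huτ, hc⟩ := h.2 _ hu
    exact ⟨τ.erase u, erase_mem_lk hτ (singleton_subset_iff.1 huτ) (by omega)⟩
  · obtain ⟨-, hηu, hdisj⟩ := mem_lk.1 hη
    obtain ⟨τ, hτ, hsub, hc⟩ := h.2 _ hηu
    have huτ : u ∈ τ := hsub (mem_union_right _ (mem_singleton_self u))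
    refine ⟨τ.erase u, erase_mem_lk hτ huτ (by omega),
      subset_erase.2 ⟨subset_union_left.trans hsub, disjoint_singleton_right.1 hdisj⟩, ?_⟩
    rw [card_erase_of_mem huτ, hc]

lemma IsPureOfRank.card_facets_pos (h : X.IsPureOfRank n) (hσ : σ ∈ X.faces) :
    0 < #{τ ∈ X.simps (n - 1) | σ ⊆ τ} := by
  obtain ⟨τ, hτ, hστ, hc⟩ := h.2 σ hσ
  have : 0 < n := hc ▸ (X.nonempty_of_mem σ hσ).card_pos.trans_le (card_le_card hστ)
  exact card_pos.2 ⟨τ, mem_filter.2 ⟨mem_simps.2 ⟨hτ, by omega⟩, hστ⟩⟩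

lemma card_facets_lk (hn : 2 ≤ n) (ha : u ∉ a) :
    #{η ∈ (X.lk {u}).simps (n - 1 - 1) | a ⊆ η} = #{τ ∈ X.simps (n - 1) | insert u a ⊆ τ} := by
  refine card_nbij' (insert u) (fun τ => τ.erase u) ?_ ?_ ?_ ?_
  · intro η hη
    obtain ⟨⟨⟨-, huη, hu⟩, hc⟩, haη⟩ := by simpa using hη
    rw [mem_coe, mem_filter, mem_simps, card_insert_of_notMem hu, hc]
    exact ⟨⟨huη, by omega⟩, insert_subset_insert u haη⟩
  · intro τ hτ
    obtain ⟨⟨hτ, hc⟩, huτ, haτ⟩ := by simpa [insert_subset_iff] using hτ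
    rw [mem_coe, mem_filter, mem_simps]
    refine ⟨⟨erase_mem_lk hτ huτ (by omega), ?_⟩, subset_erase.2 ⟨haτ, ha⟩⟩
    rw [card_erase_of_mem huτ, hc]; omega
  · intro η hη
    obtain ⟨⟨⟨-, -, hu⟩, -⟩, -⟩ := by simpa using hη
    exact erase_insert hu
  · intro τ hτ
    exact insert_erase (insert_subset_iff.1 (mem_filter.1 hτ).2).1

lemma IsPureOfRank.weight_mul_weight_lk_erase (h : X.IsPureOfRank n) (hτ : τ ∈ X.faces)
    (hu : u ∈ τ) (hc : 2 ≤ τ.card) :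
    X.weight {u} * (X.lk {u}).weight (τ.erase u) = X.weight τ / τ.card := by
  have hkn : τ.card ≤ n := h.card_le hτ
  have hu1 : {u} ∈ X.faces := singleton_mem_faces hτ hu
  have hlk : #((X.lk {u}).simps (n - 1 - 1)) = #{ρ ∈ X.simps (n - 1) | {u} ⊆ ρ} := by
    simpa using card_facets_lk (X := X) (by omega) (notMem_empty u)
  have hchoose : (n : ℝ) * (n - 1).choose (τ.card - 1) = n.choose τ.card * τ.card := by
    have := Nat.add_one_mul_choose_eq (n - 1) (τ.card - 1)
    rw [Nat.sub_add_cancel (by omega), Nat.sub_add_cancel (by omega)] at this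
    exact_mod_cast this
  have hd := h.card_facets_pos hu1
  have hF : 0 < #(X.simps (n - 1)) := hd.trans_le (card_filter_le _ _)
  have hC : 0 < (n - 1).choose (τ.card - 1) := Nat.choose_pos (by omega)
  have hC' : 0 < n.choose τ.card := Nat.choose_pos hkn
  have hn : (n : ℝ) ≠ 0 := by norm_cast; omega
  rw [weight, weight, weight, h.rank_eq, (h.lk (by omega) hu1).rank_eq, hlk,
    card_facets_lk (by omega) (notMem_erase u τ), insert_erase hu, card_erase_of_mem hu,
    card_singleton, Nat.choose_one_right]
  field_simp
  linear_combination (#{ρ ∈ X.simps (n - 1) | τ ⊆ ρ} : ℝ) * hchoose.symm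

lemma IsPureOfRank.sum_weight_eq_sum_verts [Fintype V] (h : X.IsPureOfRank n)
    {T : Finset (Finset V)} (hk : 1 ≤ k) (hT : T ⊆ X.simps k) :
    ∑ τ ∈ T, X.weight τ =
      ∑ u ∈ X.verts, X.weight {u} * ∑ τ ∈ T with u ∈ τ, (X.lk {u}).weight (τ.erase u) := by
  have hT' : ∀ τ ∈ T, τ ∈ X.faces ∧ τ.card = k + 1 := fun τ hτ => mem_simps.1 (hT hτ)
  calc ∑ τ ∈ T, X.weight τ
      = ∑ τ ∈ T, ∑ _u ∈ τ, X.weight τ / (k + 1) := by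
        refine sum_congr rfl fun τ hτ => ?_
        rw [sum_const, (hT' τ hτ).2, nsmul_eq_mul]
        field_simp
        push_cast; ring
    _ = ∑ u ∈ X.verts, ∑ τ ∈ T with u ∈ τ, X.weight τ / (k + 1) := by
        refine sum_comm' fun τ u => ?_
        simp only [mem_filter, mem_verts]
        exact ⟨fun h => ⟨⟨h.1, h.2⟩, singleton_mem_faces (hT' τ h.1).1 h.2⟩,
          fun h => h.1⟩
    _ = _ := by
        refine sum_congr rfl fun u _ => ?_
        rw [mul_sum]
        refine sum_congr rfl fun τ hτ => ?_
        obtain ⟨hτT, huτ⟩ := mem_filter.1 hτ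
        obtain ⟨hτ, hcard⟩ := hT' τ hτT
        rw [h.weight_mul_weight_lk_erase hτ huτ (by omega), hcard]
        push_cast; rfl

lemma sum_filter_erase_le_sum_simps_lk {T : Finset (Finset V)} (hk : 1 ≤ k)
    (hT : T ⊆ X.simps (k + 1)) (u : V) {f : Finset V → ℝ} (hf : ∀ e, 0 ≤ f e) :
    ∑ τ ∈ T with u ∈ τ, f (τ.erase u) ≤ ∑ e ∈ (X.lk {u}).simps k, f e := by
  refine (sum_image fun τ hτ τ' hτ' =>
    erase_injOn' u (mem_filter.1 (mem_coe.1 hτ)).2 (mem_filter.1 (mem_coe.1 hτ')).2).symm.trans_le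
    (sum_le_sum_of_subset_of_nonneg (fun e he => ?_) fun e _ _ => hf e)
  obtain ⟨τ, hτ, rfl⟩ := mem_image.1 he
  obtain ⟨hτT, huτ⟩ := mem_filter.1 hτ
  obtain ⟨hτ, hc⟩ := mem_simps.1 (hT hτT)
  exact mem_simps.2 ⟨erase_mem_lk hτ huτ (by omega), by rw [card_erase_of_mem huτ, hc]; rfl⟩

end SComplex

section Deficiency

variable {S : Type*} [Fintype S] [DecidableEq S]

lemma sum_locDef_eq_sum_card_mul (Y : SComplex (V × S)) (X : SComplex V) (u : V) :
    ∑ s, locDef Y X Prod.fst (u, s) =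
      ∑ e ∈ (X.lk {u}).simps 1, #{s | e ∈ Dset Y X Prod.fst (u, s)} * (X.lk {u}).weight e := by
  unfold locDef
  rw [sum_comm' (t' := (X.lk {u}).simps 1) (s' := fun e => {s | e ∈ Dset Y X Prod.fst (u, s)})]
  · simp only [sum_const, nsmul_eq_mul]
  · intro s e
    simp only [mem_univ, true_and, mem_filter, iff_self_and]
    exact fun he => (mem_filter.1 he).1

end Deficiency

section Coboundary

variable {G : Type*} [Group G] {φ : V → V → G}

omit [DecidableEq V] in
lemma d1_rotate_eq_one_iff (φ : V → V → G) (a b c : V) : d1 φ b c a = 1 ↔ d1 φ a b c = 1 := by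
  rw [d1, d1, mul_eq_one_comm, ← mul_assoc]

lemma exists_erase_eq_pair_d1_ne_one {τ : Finset V} (hτ : τ.card = 3)
    (hbad : ∃ a b c, τ = {a, b, c} ∧ d1 φ a b c ≠ 1) {u : V} (hu : u ∈ τ) :
    ∃ v w, τ.erase u = {v, w} ∧ d1 φ u v w ≠ 1 := by
  obtain ⟨a, b, c, rfl, hne⟩ := hbad
  have not_sub_pair : ∀ x y : V, ¬ ({a, b, c} : Finset V) ⊆ {x, y} := fun x y h => by
    have := (card_le_card h).trans card_le_two; omega
  have hab : a ≠ b := by rintro rfl; exact not_sub_pair a c (by simp)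
  have hac : a ≠ c := by rintro rfl; exact not_sub_pair a b (by simp [insert_subset_iff])
  have hbc : b ≠ c := by rintro rfl; exact not_sub_pair a b (by simp)
  simp only [mem_insert, mem_singleton] at hu
  rcases hu with rfl | rfl | rfl
  · exact ⟨b, c, erase_insert (by simp [hab, hac]), hne⟩
  · refine ⟨c, a, ?_, by rwa [Ne, d1_rotate_eq_one_iff]⟩
    ext x; simp only [mem_erase, mem_insert, mem_singleton]; grind
  · refine ⟨a, b, ?_, by rwa [Ne, d1_rotate_eq_one_iff, d1_rotate_eq_one_iff]⟩
    ext x; simp only [mem_erase, mem_insert, mem_singleton]; grind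

open Classical in
noncomputable def d1Support (X : SComplex V) (φ : V → V → G) : Finset (Finset V) :=
  (X.simps 2).filter fun τ => ∃ u v w : V, τ = {u, v, w} ∧ d1 φ u v w ≠ 1

lemma normD1_eq_sum_d1Support (X : SComplex V) (φ : V → V → G) :
    normD1 X φ = ∑ τ ∈ d1Support X φ, X.weight τ := rfl

open Classical in
lemma mem_d1Support {X : SComplex V} {τ : Finset V} :
    τ ∈ d1Support X φ ↔ τ ∈ X.simps 2 ∧ ∃ u v w : V, τ = {u, v, w} ∧ d1 φ u v w ≠ 1 :=
  mem_filter

lemma d1Support_subset_simps (X : SComplex V) (φ : V → V → G) : d1Support X φ ⊆ X.simps 2 :=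
  fun _ hτ => (mem_d1Support.1 hτ).1

end Coboundary

section Fix

variable {G : Type*} [Group G] {S : Type*} [Fintype S] [MulAction G S]

lemma fixCard_le_FixG {g : G} (hg : g ≠ 1) : fixCard G S g ≤ FixG G S :=
  le_csSup ⟨Fintype.card S, by rintro k ⟨g', -, rfl⟩; exact card_le_univ _⟩ ⟨g, hg, rfl⟩

lemma card_sub_FixG_le_card {g : G} (hg : g ≠ 1) {A : Finset S}
    (hA : ∀ s, g • s ≠ s → s ∈ A) : (Fintype.card S : ℝ) - FixG G S ≤ #A := by
  classical
  have hcover : (univ : Finset S) ⊆ ({s | g • s = s} : Finset S) ∪ A := fun s _ => by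
    by_cases h : g • s = s
    · exact mem_union_left _ (mem_filter.2 ⟨mem_univ s, h⟩)
    · exact mem_union_right _ (hA s h)
  have hcard := (card_le_card hcover).trans (card_union_le _ _)
  have hfix := fixCard_le_FixG (S := S) hg
  rw [card_univ] at hcard
  rw [fixCard] at hfix
  rw [sub_le_iff_le_add']
  exact_mod_cast (by omega : Fintype.card S ≤ FixG G S + #A)

end Fix

section Ycomplex

variable {G : Type*} [Group G] {S : Type*} [Fintype S] [DecidableEq S] [MulAction G S]
  [Fintype V] {X : SComplex V} {φ : V → V → G}

lemma mem_Ycomplex {σ : Finset (V × S)} :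
    σ ∈ (Ycomplex X φ S).faces ↔ σ.image Prod.fst ∈ X.faces ∧
      (σ.image Prod.fst).card = σ.card ∧
      ∀ p ∈ σ, ∀ q ∈ σ, p.1 ≠ q.1 → p.2 = φ p.1 q.1 • q.2 := by
  simp [Ycomplex]

lemma singleton_mem_Ycomplex {p : V × S} :
    {p} ∈ (Ycomplex X φ S).faces ↔ {p.1} ∈ X.faces := by
  simp +contextual [mem_Ycomplex]

lemma d1_smul_eq_of_mem_Ycomplex {σ : Finset (V × S)} (hσ : σ ∈ (Ycomplex X φ S).faces)
    {u v w : V} {s a b : S} (hu : (u, s) ∈ σ) (hv : (v, a) ∈ σ) (hw : (w, b) ∈ σ)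
    (huv : u ≠ v) (hvw : v ≠ w) (hwu : w ≠ u) : d1 φ u v w • s = s := by
  have hlift := (mem_Ycomplex.1 hσ).2.2
  calc d1 φ u v w • s = φ u v • φ v w • φ w u • s := by simp only [d1, mul_smul]
    _ = s := by rw [← hlift _ hw _ hu hwu, ← hlift _ hv _ hw hvw, ← hlift _ hu _ hv huv]

lemma mem_Dset_Ycomplex {u v w : V} {s : S} {e : Finset V} (he : e ∈ (X.lk {u}).simps 1)
    (hevw : e = {v, w}) (hs : d1 φ u v w • s ≠ s) :
    e ∈ Dset (Ycomplex X φ S) X Prod.fst (u, s) := by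
  refine mem_filter.2 ⟨he, ?_⟩
  rintro ⟨η, hη, rfl⟩
  obtain ⟨-, hηu, -⟩ := SComplex.mem_lk.1 hη
  obtain ⟨heX, hcard⟩ := SComplex.mem_simps.1 he
  have hu : u ∉ η.image Prod.fst := disjoint_singleton_right.1 (SComplex.mem_lk.1 heX).2.2
  have hvw : v ≠ w := by rintro rfl; simp [hevw] at hcard
  obtain ⟨⟨v, a⟩, ha, rfl⟩ := mem_image.1 (hevw ▸ mem_insert_self v {w})
  obtain ⟨⟨w, b⟩, hb, rfl⟩ := mem_image.1 (hevw ▸ mem_insert_of_mem (mem_singleton_self w))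
  refine hs (d1_smul_eq_of_mem_Ycomplex hηu (mem_union_right _ (mem_singleton_self _))
    (mem_union_left _ ha) (mem_union_left _ hb) ?_ hvw ?_)
  · exact fun h => hu (mem_image.2 ⟨_, ha, h.symm⟩)
  · exact fun h => hu (mem_image.2 ⟨_, hb, h⟩)

lemma filter_fst_verts_Ycomplex {u : V} (hu : {u} ∈ X.faces) :
    {p ∈ (Ycomplex X φ S).verts | p.1 = u} = univ.map (Function.Embedding.sectR u S) := by
  ext ⟨v, t⟩
  simp only [mem_filter, SComplex.mem_verts, singleton_mem_Ycomplex, mem_map, mem_univ,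
    Function.Embedding.sectR_apply, Prod.mk.injEq, true_and, exists_eq_right]
  exact ⟨fun h => h.2.symm, fun h => ⟨h ▸ hu, h.symm⟩⟩

lemma deficiency_Ycomplex :
    deficiency (Ycomplex X φ S) X Prod.fst =
      ∑ u ∈ X.verts, X.weight {u} / Fintype.card S *
        ∑ s, locDef (Ycomplex X φ S) X Prod.fst (u, s) := by
  refine sum_congr rfl fun u hu => ?_
  rw [filter_fst_verts_Ycomplex (SComplex.mem_verts.1 hu), card_map, card_univ, sum_map]
  rfl

lemma card_sub_FixG_le_card_Dset {τ : Finset V} (hτ : τ ∈ d1Support X φ) {u : V} (hu : u ∈ τ) :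
    (Fintype.card S : ℝ) - FixG G S ≤
      #{s | τ.erase u ∈ Dset (Ycomplex X φ S) X Prod.fst (u, s)} := by
  obtain ⟨hτ2, hbad⟩ := mem_d1Support.1 hτ
  obtain ⟨hτX, hcard⟩ := SComplex.mem_simps.1 hτ2
  obtain ⟨v, w, hvw, hne⟩ := exists_erase_eq_pair_d1_ne_one hcard hbad hu
  have he : τ.erase u ∈ (X.lk {u}).simps 1 := SComplex.mem_simps.2
    ⟨SComplex.erase_mem_lk hτX hu (by omega), by rw [card_erase_of_mem hu, hcard]⟩
  exact card_sub_FixG_le_card hne fun s hs => mem_filter.2 ⟨mem_univ s, mem_Dset_Ycomplex he hvw hs⟩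

lemma sum_d1Support_le_sum_locDef (u : V) :
    ∑ τ ∈ d1Support X φ with u ∈ τ,
        ((Fintype.card S : ℝ) - FixG G S) * (X.lk {u}).weight (τ.erase u) ≤
      ∑ s, locDef (Ycomplex X φ S) X Prod.fst (u, s) := by
  rw [sum_locDef_eq_sum_card_mul]
  calc _ ≤ ∑ τ ∈ d1Support X φ with u ∈ τ,
          (#{s | τ.erase u ∈ Dset (Ycomplex X φ S) X Prod.fst (u, s)} : ℝ) *
            (X.lk {u}).weight (τ.erase u) :=
        sum_le_sum fun τ hτ => mul_le_mul_of_nonneg_right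
          (card_sub_FixG_le_card_Dset (mem_filter.1 hτ).1 (mem_filter.1 hτ).2)
          (SComplex.weight_nonneg _ _)
    _ ≤ _ := SComplex.sum_filter_erase_le_sum_simps_lk le_rfl (d1Support_subset_simps X φ) u
        (f := fun e => #{s | e ∈ Dset (Ycomplex X φ S) X Prod.fst (u, s)} * (X.lk {u}).weight e)
        fun e => mul_nonneg (Nat.cast_nonneg _) (SComplex.weight_nonneg _ _)

end Ycomplex

theorem normD1_le_deficiency_general
    {V : Type*} [Fintype V] [DecidableEq V]
    {G : Type*} [Group G] {S : Type*} [Fintype S] [DecidableEq S]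
    [MulAction G S]
    (X : SComplex V) (n : ℕ) (hpure : X.IsPureOfRank n)
    (φ : V → V → G) :
    (((Fintype.card S : ℝ) - FixG G S) / Fintype.card S) * normD1 X φ ≤
      deficiency (Ycomplex X φ S) X Prod.fst := by
  rw [normD1_eq_sum_d1Support,
    hpure.sum_weight_eq_sum_verts one_le_two (d1Support_subset_simps X φ), deficiency_Ycomplex,
    mul_sum]
  refine sum_le_sum fun u _ => ?_
  calc _ = X.weight {u} / Fintype.card S * ∑ τ ∈ d1Support X φ with u ∈ τ,
          ((Fintype.card S : ℝ) - FixG G S) * (X.lk {u}).weight (τ.erase u) := by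
        rw [← mul_sum]; ring
    _ ≤ _ := mul_le_mul_of_nonneg_left (sum_d1Support_le_sum_locDef u)
        (div_nonneg (X.weight_nonneg _) (Nat.cast_nonneg _))

/-- the deficiency of `Y_φ` is at least `((|S|-Fix_G(S))/|S|)·‖d₁φ‖`. -/
theorem normD1_le_deficiency
    {V : Type*} [Fintype V] [DecidableEq V]
    {G : Type*} [Group G] {S : Type*} [Fintype S] [DecidableEq S] [Nonempty S]
    [MulAction G S]
    (X : SComplex V) (n : ℕ) (hn : 3 ≤ n) (hpure : X.IsPureOfRank n)
    (φ : V → V → G) (hφ : IsCochain G φ) :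
    (((Fintype.card S : ℝ) - FixG G S) / Fintype.card S) * normD1 X φ ≤
      deficiency (Ycomplex X φ S) X Prod.fst :=
  normD1_le_deficiency_general X n hpure φ
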